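/- With the SBAL function L(y) = −ρ b^T y + Σ_i h(ρ x_i − c_i + A_i^T y) as above, for all u, v ∈ ℝ^m: L(u) ≤ L(v) + ∇L(v)^T(u−v) + (1/2)(u−v)^T A A^T (u−v). That is, the quadratic surrogate with Hessian A A^T majorizes L. -/

import Mathlib

/-!
Each summand `sbal_h μ ρ` has derivative `sbal_z μ ρ`, whose own derivative `z / √(t² + 4ρμ)`
lies in `(0, 1)`. Hence `t ↦ h t - t² / 2` is concave and lies below its tangent lines:
`h t' ≤ h t + z t * (t' - t) + (t' - t)² / 2`. Applying this at `t = ρ xⱼ - cⱼ + (Aᵀ v)ⱼ` with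
increment `(Aᵀ (u - v))ⱼ` and summing over `j` produces `(u - v)ᵀ A Aᵀ (u - v)` as the quadratic
term, while the linear part `-ρ bᵀ y` of `L` is reproduced exactly.
-/

open Matrix

noncomputable def sbal_s (μ ρ t : ℝ) : ℝ := (Real.sqrt (t ^ 2 + 4 * ρ * μ) - t) / 2
noncomputable def sbal_z (μ ρ t : ℝ) : ℝ := (Real.sqrt (t ^ 2 + 4 * ρ * μ) + t) / 2
noncomputable def sbal_h (μ ρ t : ℝ) : ℝ :=
  -(ρ * μ) * Real.log (sbal_s μ ρ t) + (sbal_z μ ρ t) ^ 2 / 2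

theorem abs_lt_sqrt_sq_add {a : ℝ} (ha : 0 < a) (t : ℝ) : |t| < √(t ^ 2 + a) :=
  (Real.lt_sqrt (abs_nonneg t)).2 (by rw [sq_abs]; linarith)

theorem hasDerivAt_sqrt_sq_add {a : ℝ} (ha : 0 < a) (t : ℝ) :
    HasDerivAt (fun t => √(t ^ 2 + a)) (t / √(t ^ 2 + a)) t := by
  have hpos : t ^ 2 + a ≠ 0 := by positivity
  refine (((hasDerivAt_pow 2 t).add_const a).sqrt hpos).congr_deriv ?_
  field_simp
  push_cast
  ring

theorem ConcaveOn.le_add_mul_sub_of_hasDerivAt {S : Set ℝ} {f : ℝ → ℝ} {f' x y : ℝ}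
    (hfc : ConcaveOn ℝ S f) (hx : x ∈ S) (hy : y ∈ S) (hf' : HasDerivAt f f' x) :
    f y ≤ f x + f' * (y - x) := by
  rcases lt_trichotomy x y with hxy | rfl | hyx
  · have := hfc.slope_le_of_hasDerivAt hx hy hxy hf'
    rw [slope_def_field, div_le_iff₀ (sub_pos.2 hxy)] at this
    linarith
  · simp
  · have := hfc.le_slope_of_hasDerivAt hy hx hyx hf'
    rw [slope_def_field, le_div_iff₀ (sub_pos.2 hyx)] at this
    linarith

theorem le_add_mul_sub_add_sq_of_hasDerivAt_of_le {f f' f'' : ℝ → ℝ} {K : ℝ}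
    (hf : ∀ t, HasDerivAt f (f' t) t) (hf' : ∀ t, HasDerivAt f' (f'' t) t)
    (hf'' : ∀ t, f'' t ≤ K) (x y : ℝ) :
    f y ≤ f x + f' x * (y - x) + K / 2 * (y - x) ^ 2 := by
  have hsq : ∀ t : ℝ, HasDerivAt (fun t => K / 2 * t ^ 2) (K * t) t := fun t =>
    ((hasDerivAt_pow 2 t).const_mul (K / 2)).congr_deriv (by push_cast; ring)
  have hconc : ConcaveOn ℝ Set.univ fun t => f t - K / 2 * t ^ 2 := by
    refine concaveOn_of_hasDerivWithinAt2_nonpos (f' := fun t => f' t - K * t)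
      (f'' := fun t => f'' t - K) convex_univ ?_ ?_ ?_ ?_
    · exact fun t _ => ((hf t).sub (hsq t)).continuousAt.continuousWithinAt
    · exact fun t _ => ((hf t).sub (hsq t)).hasDerivWithinAt
    · exact fun t _ =>
        ((hf' t).sub ((hasDerivAt_id t).const_mul K)).hasDerivWithinAt.congr_deriv (by simp)
    · exact fun t _ => sub_nonpos.2 (hf'' t)
  have := hconc.le_add_mul_sub_of_hasDerivAt (Set.mem_univ x) (Set.mem_univ y)
    ((hf x).sub (hsq x))
  linarith

theorem sum_add_mulVec_transpose_le {ι κ : Type*} [Fintype ι] [Fintype κ] {f f' : ℝ → ℝ}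
    {K : ℝ} (hf : ∀ t t', f t' ≤ f t + f' t * (t' - t) + K / 2 * (t' - t) ^ 2)
    (A : Matrix κ ι ℝ) (w : ι → ℝ) (d : κ → ℝ) :
    ∑ j, f (w j + (Aᵀ *ᵥ d) j) ≤
      ∑ j, f (w j) + (A *ᵥ fun j => f' (w j)) ⬝ᵥ d + K / 2 * (d ⬝ᵥ ((A * Aᵀ) *ᵥ d)) := by
  set e := Aᵀ *ᵥ d
  have hlin : (A *ᵥ fun j => f' (w j)) ⬝ᵥ d = ∑ j, f' (w j) * e j := by
    rw [dotProduct_comm, dotProduct_mulVec, ← mulVec_transpose, dotProduct_comm]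
    rfl
  have hquad : d ⬝ᵥ ((A * Aᵀ) *ᵥ d) = ∑ j, e j ^ 2 := by
    rw [← mulVec_mulVec, dotProduct_mulVec, ← mulVec_transpose]
    simp only [dotProduct, sq]
    rfl
  rw [hlin, hquad, Finset.mul_sum, ← Finset.sum_add_distrib, ← Finset.sum_add_distrib]
  refine Finset.sum_le_sum fun j _ => ?_
  simpa using hf (w j) (w j + e j)

section sbal

variable {μ ρ : ℝ}

theorem sbal_s_add_sbal_z (t : ℝ) : sbal_s μ ρ t + sbal_z μ ρ t = √(t ^ 2 + 4 * ρ * μ) := by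
  unfold sbal_s sbal_z
  ring

theorem sbal_s_pos (hρμ : 0 < ρ * μ) (t : ℝ) : 0 < sbal_s μ ρ t := by
  have := abs_lt_sqrt_sq_add (by linarith : 0 < 4 * ρ * μ) t
  unfold sbal_s
  linarith [le_abs_self t]

theorem sbal_s_mul_sbal_z (hρμ : 0 < ρ * μ) (t : ℝ) : sbal_s μ ρ t * sbal_z μ ρ t = ρ * μ := by
  have := Real.sq_sqrt (by nlinarith [sq_nonneg t] : 0 ≤ t ^ 2 + 4 * ρ * μ)
  unfold sbal_s sbal_z
  linear_combination this / 4

theorem hasDerivAt_sbal_s (hρμ : 0 < ρ * μ) (t : ℝ) :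
    HasDerivAt (sbal_s μ ρ) (-(sbal_s μ ρ t / √(t ^ 2 + 4 * ρ * μ))) t := by
  have hR := abs_lt_sqrt_sq_add (by linarith : 0 < 4 * ρ * μ) t
  refine (((hasDerivAt_sqrt_sq_add (by linarith) t).sub (hasDerivAt_id t)).div_const 2
    ).congr_deriv ?_
  unfold sbal_s
  field_simp [(abs_nonneg t).trans_lt hR |>.ne']
  ring

theorem hasDerivAt_sbal_z (hρμ : 0 < ρ * μ) (t : ℝ) :
    HasDerivAt (sbal_z μ ρ) (sbal_z μ ρ t / √(t ^ 2 + 4 * ρ * μ)) t := by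
  have hR := abs_lt_sqrt_sq_add (by linarith : 0 < 4 * ρ * μ) t
  refine (((hasDerivAt_sqrt_sq_add (by linarith) t).add (hasDerivAt_id t)).div_const 2
    ).congr_deriv ?_
  unfold sbal_z
  field_simp [(abs_nonneg t).trans_lt hR |>.ne']
  ring

theorem hasDerivAt_sbal_h (hρμ : 0 < ρ * μ) (t : ℝ) :
    HasDerivAt (sbal_h μ ρ) (sbal_z μ ρ t) t := by
  have hR := (abs_nonneg t).trans_lt (abs_lt_sqrt_sq_add (by linarith : 0 < 4 * ρ * μ) t)
  have hs := sbal_s_pos hρμ t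
  refine ((((hasDerivAt_sbal_s hρμ t).log hs.ne').const_mul _).add
    (((hasDerivAt_sbal_z hρμ t).pow 2).div_const 2)).congr_deriv ?_
  -- `h' = ρμ / R + z² / R = z (s + z) / R = z`, as `s z = ρμ` and `s + z = R`
  rw [← sbal_s_mul_sbal_z hρμ t, ← sbal_s_add_sbal_z (μ := μ) (ρ := ρ) t] at *
  field_simp
  ring

theorem sbal_h_le (hρμ : 0 < ρ * μ) (t t' : ℝ) :
    sbal_h μ ρ t' ≤ sbal_h μ ρ t + sbal_z μ ρ t * (t' - t) + 1 / 2 * (t' - t) ^ 2 := by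
  refine le_add_mul_sub_add_sq_of_hasDerivAt_of_le (hasDerivAt_sbal_h hρμ)
    (hasDerivAt_sbal_z hρμ) (fun t => ?_) t t'
  rw [div_le_one ((abs_nonneg t).trans_lt (abs_lt_sqrt_sq_add (by linarith) t)),
    ← sbal_s_add_sbal_z]
  linarith [sbal_s_pos hρμ t]

end sbal

theorem stmt5 {m n : ℕ} (A : Matrix (Fin m) (Fin n) ℝ) (b : Fin m → ℝ) (c x : Fin n → ℝ)
    (μ ρ : ℝ) (hμ : 0 < μ) (hρ : 0 < ρ)
    (L : (Fin m → ℝ) → ℝ)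
    (hL : ∀ y, L y = -(ρ * (b ⬝ᵥ y)) + ∑ j, sbal_h μ ρ (ρ * x j - c j + (Aᵀ *ᵥ y) j)) :
    ∀ u v : Fin m → ℝ,
      L u ≤ L v
        + (A *ᵥ (fun j => sbal_z μ ρ (ρ * x j - c j + (Aᵀ *ᵥ v) j)) - ρ • b) ⬝ᵥ (u - v)
        + (1 / 2) * ((u - v) ⬝ᵥ ((A * Aᵀ) *ᵥ (u - v))) := by
  intro u v
  have hAu : Aᵀ *ᵥ u = Aᵀ *ᵥ v + Aᵀ *ᵥ (u - v) := by rw [← mulVec_add, add_sub_cancel]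
  have hbu : b ⬝ᵥ u = b ⬝ᵥ v + b ⬝ᵥ (u - v) := by rw [dotProduct_sub, add_sub_cancel]
  have hsum := sum_add_mulVec_transpose_le (sbal_h_le (mul_pos hρ hμ)) A
    (fun j => ρ * x j - c j + (Aᵀ *ᵥ v) j) (u - v)
  simp only [hL, hAu, hbu, Pi.add_apply, ← add_assoc, sub_dotProduct, smul_dotProduct,
    smul_eq_mul] at hsum ⊢
  linarith
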